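/- arXiv:1011.4404 — 2 statements merged into one kernel-verified Lean document; each statement's English description precedes it below -/
import Mathlib

section
/- Let r_n = (w - c + 2^(n-1))/w with w > 0 and w - c + 1 > 0 and c > 1. Then the weighted geometric mean ∏_{n=1}^∞ r_n^{(1/2)^n} converges to a finite positive number, while the weighted arithmetic mean ∑_{n=1}^∞ (1/2)^n r_n diverges. -/
/-!
Taking logarithms turns the geometric mean into `exp (∑ (1/2)^(n+1) log r_n)`. Since
`(w - c + 1)/w ≤ r_n ≤ 2^n (|w - c| + 1)/w`, the logarithms grow at most linearly in `n`, so this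
series converges against the geometric weights. The arithmetic mean, by contrast, has the closed
form `((w - c)(1 - 2^(-N)) + N/2)/w`: every outcome contributes `1/(2w)`.
-/

open Filter Finset Real Topology

lemma abs_log_le_of_le_of_le {x m M : ℝ} (hm : 0 < m) (hmx : m ≤ x) (hxM : x ≤ M) :
    |log x| ≤ |log m| + |log M| := by
  have hlow : log m ≤ log x := log_le_log hm hmx
  have hup : log x ≤ log M := log_le_log (hm.trans_le hmx) hxM
  rw [abs_le]
  constructor <;> linarith [neg_abs_le (log m), le_abs_self (log M), abs_nonneg (log m),
    abs_nonneg (log M)]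

lemma summable_mul_geometric_of_abs_le_affine {f : ℕ → ℝ} {C D q : ℝ} (hq : |q| < 1)
    (hf : ∀ n, |f n| ≤ C + D * n) : Summable fun n => f n * q ^ n := by
  have hgeom : Summable fun n : ℕ => |q| ^ n :=
    summable_geometric_of_lt_one (abs_nonneg q) hq
  have hlin : Summable fun n : ℕ => (n : ℝ) * |q| ^ n := by
    simpa using summable_pow_mul_geometric_of_norm_lt_one (R := ℝ) 1 (r := |q|) (by simpa)
  refine Summable.of_norm_bounded ((hgeom.mul_left C).add (hlin.mul_left D)) fun n => ?_
  rw [norm_mul, norm_pow, Real.norm_eq_abs, Real.norm_eq_abs, ← mul_assoc, ← add_mul]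
  exact mul_le_mul_of_nonneg_right (hf n) (by positivity)

lemma tendsto_prod_rpow_of_summable_log_mul {a p : ℕ → ℝ} (ha : ∀ n, 0 < a n)
    (h : Summable fun n => log (a n) * p n) :
    Tendsto (fun T => ∏ n ∈ range T, a n ^ p n) atTop (𝓝 (exp (∑' n, log (a n) * p n))) := by
  have hexp : ∀ T, ∏ n ∈ range T, a n ^ p n = exp (∑ n ∈ range T, log (a n) * p n) := fun T => by
    rw [exp_sum]
    exact prod_congr rfl fun n _ => rpow_def_of_pos (ha n) _
  simp only [hexp]
  exact (continuous_exp.tendsto _).comp h.hasSum.tendsto_sum_nat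

lemma abs_log_sub_add_two_pow_div_le {w c : ℝ} (hw : 0 < w) (hwc : 0 < w - c + 1) (n : ℕ) :
    |log ((w - c + 2 ^ n) / w)| ≤
      (|log ((w - c + 1) / w)| + |log ((|w - c| + 1) / w)|) + log 2 * n := by
  have h2n : (1 : ℝ) ≤ 2 ^ n := one_le_pow₀ one_le_two
  have hlow : (w - c + 1) / w ≤ (w - c + 2 ^ n) / w := by gcongr
  have hup : (w - c + 2 ^ n) / w ≤ (|w - c| + 1) / w * 2 ^ n := by
    rw [div_mul_eq_mul_div]
    gcongr
    nlinarith [le_abs_self (w - c), abs_nonneg (w - c)]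
  have hbound := abs_log_le_of_le_of_le (div_pos hwc hw) hlow hup
  rw [log_mul (by positivity) (by positivity), log_pow] at hbound
  have hlog2 : 0 ≤ n * log 2 := by positivity
  linarith [abs_add_le (log ((|w - c| + 1) / w)) (n * log 2), abs_of_nonneg hlog2]

lemma sum_range_half_pow_succ_mul_add_two_pow (x : ℝ) (N : ℕ) :
    ∑ n ∈ range N, (1 / 2 : ℝ) ^ (n + 1) * (x + 2 ^ n) = x * (1 - (1 / 2) ^ N) + N / 2 := by
  induction N with
  | zero => simp
  | succ N ih =>
    rw [sum_range_succ, ih]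
    have h : (1 / 2 : ℝ) ^ N * 2 ^ N = 1 := by rw [← mul_pow]; norm_num
    push_cast
    linear_combination (1 / 2 : ℝ) * h

theorem st_petersburg_non_ergodic_general (w c : ℝ) (hw : 0 < w) (hwc : 0 < w - c + 1) :
    (∃ P : ℝ, 0 < P ∧
      Tendsto (fun T : ℕ => ∏ n ∈ Finset.range T,
          ((w - c + 2^n) / w) ^ ((1/2 : ℝ)^(n+1))) atTop (nhds P)) ∧
    Tendsto (fun N : ℕ => ∑ n ∈ Finset.range N, (1/2 : ℝ)^(n+1) * ((w - c + 2^n) / w))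
      atTop atTop := by
  constructor
  · have hpos : ∀ n : ℕ, 0 < (w - c + 2 ^ n) / w := fun n =>
      div_pos (by linarith [one_le_pow₀ (M₀ := ℝ) one_le_two (n := n)]) hw
    have hsum : Summable fun n : ℕ => log ((w - c + 2 ^ n) / w) * (1 / 2 : ℝ) ^ (n + 1) := by
      have := (summable_mul_geometric_of_abs_le_affine (q := 1 / 2) (by norm_num [abs_of_pos])
        (abs_log_sub_add_two_pow_div_le hw hwc)).mul_right (1 / 2)
      simpa only [pow_succ, mul_assoc] using this
    exact ⟨_, exp_pos _, tendsto_prod_rpow_of_summable_log_mul hpos hsum⟩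
  · have hclosed : ∀ N : ℕ, ∑ n ∈ range N, (1 / 2 : ℝ) ^ (n + 1) * ((w - c + 2 ^ n) / w)
        = ((w - c) * (1 - (1 / 2) ^ N) + N / 2) / w := fun N => by
      simp only [← mul_div_assoc, ← sum_div, sum_range_half_pow_succ_mul_add_two_pow]
    simp only [hclosed]
    refine Tendsto.atTop_div_const hw (Tendsto.add_atTop (C := (w - c) * (1 - 0)) ?_ ?_)
    · exact ((tendsto_pow_atTop_nhds_zero_of_lt_one (by norm_num) (by norm_num)).const_sub 1).const_mul _
    · exact tendsto_natCast_atTop_atTop.atTop_div_const two_pos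

/-- Non-ergodicity of the St. Petersburg lottery: for r_n = (w - c + 2^(n-1))/w with
w > 0, w - c + 1 > 0 and c > 1, the weighted geometric mean ∏ r_n^{(1/2)^n} converges
to a finite positive number while the weighted arithmetic mean ∑ (1/2)^n r_n diverges. -/
theorem st_petersburg_non_ergodic (w c : ℝ) (hw : 0 < w) (hwc : 0 < w - c + 1)
    (hc : 1 < c) :
    (∃ P : ℝ, 0 < P ∧
      Tendsto (fun T : ℕ => ∏ n ∈ Finset.range T,
          ((w - c + 2^n) / w) ^ ((1/2 : ℝ)^(n+1))) atTop (nhds P)) ∧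
    Tendsto (fun N : ℕ => ∑ n ∈ Finset.range N, (1/2 : ℝ)^(n+1) * ((w - c + 2^n) / w))
      atTop atTop :=
  st_petersburg_non_ergodic_general w c hw hwc
end

section
/- Fix w > 0. Define g(c) = ∑_{n=1}^∞ (1/2)^n ln((w - c + 2^(n-1))/w) for c ∈ (1, w+1). Then g is continuous and strictly decreasing on (1, w+1), g(c) > 0 for c near 1, and g(c) → -∞ as c → (w+1)^-; hence there exists a unique c* ∈ (1, w+1) with g(c*) = 0. -/
/-!
Each summand `2^{-(n+1)} log ((w - c + 2^n) / w)` is strictly decreasing in `c`. For `c` in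
`[0, b]` with `b < w + 1` the argument of the logarithm lies between `(w + 1 - b) / w` and
`(w + 1) / w · 2^n`, so the logarithm is `O(n)` and the summands are dominated by
`2^{-n} (A + B n)`; the Weierstrass M-test then gives continuity, and summing the termwise
inequalities gives strict monotonicity. At `c = 1` every summand is nonnegative and the second
one is positive. As `c → w + 1` only the first summand `½ log ((w + 1 - c) / w)` is unbounded,
the tail being bounded by its value at `c = 1`. The unique zero then comes from the intermediate
value theorem.
-/

open Filter Set Real Topology

theorem existsUnique_eq_zero_of_strictAntiOn {f : ℝ → ℝ} {a b : ℝ} (hab : a < b)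
    (hcont : ContinuousOn f (Ioo a b)) (hanti : StrictAntiOn f (Ioo a b))
    (hpos : ∀ᶠ x in 𝓝[>] a, 0 < f x) (hneg : ∀ᶠ x in 𝓝[<] b, f x < 0) :
    ∃! x, x ∈ Ioo a b ∧ f x = 0 := by
  obtain ⟨x₁, hfx₁, hx₁⟩ := (hpos.and (Ioo_mem_nhdsGT_of_mem ⟨le_rfl, hab⟩)).exists
  obtain ⟨x₂, hfx₂, hx₂⟩ := (hneg.and (Ioo_mem_nhdsLT_of_mem ⟨hx₁.2, le_rfl⟩)).exists
  have hsub : Icc x₁ x₂ ⊆ Ioo a b := Icc_subset_Ioo hx₁.1 hx₂.2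
  obtain ⟨x, hx, hfx⟩ :=
    intermediate_value_Ioo' hx₂.1.le (hcont.mono hsub) ⟨hfx₂, hfx₁⟩
  have hxab : x ∈ Ioo a b := hsub (Ioo_subset_Icc_self hx)
  exact ⟨x, ⟨hxab, hfx⟩, fun y hy => hanti.injOn hy.1 hxab (hy.2.trans hfx.symm)⟩

theorem summable_pow_mul_affine {r : ℝ} (hr : |r| < 1) (A B : ℝ) :
    Summable fun n : ℕ => r ^ n * (A + n * B) := by
  have hgeom := (summable_geometric_of_abs_lt_one hr).mul_left A
  have harith := (summable_pow_mul_geometric_of_norm_lt_one 1 hr).mul_left B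
  refine (hgeom.add harith).congr fun n => ?_
  simp only [pow_one]
  ring

theorem abs_log_le_abs_log_add_abs_log {x a b : ℝ} (ha : 0 < a) (hax : a ≤ x) (hxb : x ≤ b) :
    |log x| ≤ |log a| + |log b| :=
  (abs_le_max_abs_abs (log_le_log ha hax) (log_le_log (ha.trans_le hax) hxb)).trans
    (max_le_add_of_nonneg (abs_nonneg _) (abs_nonneg _))

noncomputable def stPetersburgTerm (w c : ℝ) (n : ℕ) : ℝ :=
  (1 / 2) ^ (n + 1) * log ((w - c + 2 ^ n) / w)

noncomputable def stPetersburgGrowth (w c : ℝ) : ℝ :=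
  ∑' n, stPetersburgTerm w c n

namespace StPetersburg

variable {w : ℝ}

theorem arg_pos {c : ℝ} (hc : c < w + 1) (n : ℕ) : 0 < w - c + 2 ^ n := by
  have : (1 : ℝ) ≤ 2 ^ n := one_le_pow₀ one_le_two
  linarith

theorem term_strictAntiOn (hw : 0 < w) (n : ℕ) :
    StrictAntiOn (stPetersburgTerm w · n) (Iio (w + 1)) := by
  intro c₁ _ c₂ hc₂ hlt
  refine mul_lt_mul_of_pos_left ?_ (by positivity)
  exact log_lt_log (div_pos (arg_pos hc₂ n) hw) (by gcongr)

theorem abs_log_arg_le {c b : ℝ} (hw : 0 < w) (hc₀ : 0 ≤ c) (hcb : c ≤ b) (hb : b < w + 1)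
    (n : ℕ) :
    |log ((w - c + 2 ^ n) / w)| ≤ |log ((w + 1 - b) / w)| + (log ((w + 1) / w) + n * log 2) := by
  have hpow : (1 : ℝ) ≤ 2 ^ n := one_le_pow₀ one_le_two
  have hupper : (w - c + 2 ^ n) / w ≤ (w + 1) / w * 2 ^ n := by
    rw [div_mul_eq_mul_div]
    gcongr
    nlinarith
  have hlog_upper : log ((w + 1) / w * 2 ^ n) = log ((w + 1) / w) + n * log 2 := by
    rw [log_mul (by positivity) (by positivity), log_pow]
  have hlog_nonneg : 0 ≤ log ((w + 1) / w * 2 ^ n) :=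
    log_nonneg (((one_le_div hw).2 (by linarith)).trans
      (le_mul_of_one_le_right (by positivity) hpow))
  calc |log ((w - c + 2 ^ n) / w)|
      ≤ |log ((w + 1 - b) / w)| + |log ((w + 1) / w * 2 ^ n)| :=
        abs_log_le_abs_log_add_abs_log (div_pos (by linarith) hw) (by gcongr; linarith) hupper
    _ = |log ((w + 1 - b) / w)| + (log ((w + 1) / w) + n * log 2) := by
        rw [abs_of_nonneg hlog_nonneg, hlog_upper]

theorem exists_summable_bound {b : ℝ} (hw : 0 < w) (hb : b < w + 1) :
    ∃ u : ℕ → ℝ, Summable u ∧ ∀ n, ∀ c ∈ Icc 0 b, ‖stPetersburgTerm w c n‖ ≤ u n := by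
  set A := |log ((w + 1 - b) / w)| + log ((w + 1) / w)
  refine ⟨fun n => (1 / 2) ^ (n + 1) * (A + n * log 2), ?_, fun n c hc => ?_⟩
  · have h := (summable_pow_mul_affine (r := 1 / 2) (by norm_num) A (log 2)).mul_left (1 / 2)
    exact h.congr fun n => by ring
  · rw [stPetersburgTerm, norm_mul, Real.norm_eq_abs, Real.norm_eq_abs, abs_of_pos (by positivity)]
    refine mul_le_mul_of_nonneg_left ?_ (by positivity)
    exact (abs_log_arg_le hw hc.1 hc.2 hb n).trans_eq (add_assoc _ _ _).symm

theorem summable_term {c : ℝ} (hw : 0 < w) (hc₀ : 0 ≤ c) (hc : c < w + 1) :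
    Summable (stPetersburgTerm w c) := by
  obtain ⟨u, hu, hbound⟩ := exists_summable_bound hw hc
  exact hu.of_norm_bounded fun n => hbound n c ⟨hc₀, le_rfl⟩

theorem continuousOn_growth (hw : 0 < w) :
    ContinuousOn (stPetersburgGrowth w) (Ioo 0 (w + 1)) := by
  intro c hc
  obtain ⟨b, hcb, hb⟩ := exists_between hc.2
  obtain ⟨u, hu, hbound⟩ := exists_summable_bound hw hb
  have hterm (n : ℕ) : ContinuousOn (stPetersburgTerm w · n) (Icc 0 b) := by
    refine continuousOn_const.mul (ContinuousOn.log (by fun_prop) fun x hx => ?_)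
    exact (div_pos (arg_pos (hx.2.trans_lt hb) n) hw).ne'
  have hcont := continuousOn_tsum hterm hu hbound
  exact (hcont.continuousAt (Icc_mem_nhds hc.1 hcb)).continuousWithinAt

theorem growth_strictAntiOn (hw : 0 < w) :
    StrictAntiOn (stPetersburgGrowth w) (Ico 0 (w + 1)) := by
  intro c₁ hc₁ c₂ hc₂ hlt
  have hterm (n : ℕ) := term_strictAntiOn hw n hc₁.2 hc₂.2 hlt
  exact Summable.tsum_lt_tsum (i := 0) (fun n => (hterm n).le) (hterm 0)
    (summable_term hw (hc₁.1.trans hlt.le) hc₂.2) (summable_term hw hc₁.1 hc₁.2)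

theorem growth_one_pos (hw : 0 < w) : 0 < stPetersburgGrowth w 1 := by
  have hterm_nonneg (n : ℕ) : 0 ≤ stPetersburgTerm w 1 n := by
    have : (1 : ℝ) ≤ 2 ^ n := one_le_pow₀ one_le_two
    exact mul_nonneg (by positivity) (log_nonneg ((le_div_iff₀ hw).2 (by linarith)))
  refine (summable_term hw zero_le_one (by linarith)).tsum_pos hterm_nonneg 1 ?_
  exact mul_pos (by positivity) (log_pos ((lt_div_iff₀ hw).2 (by norm_num; linarith)))

theorem eventually_growth_pos (hw : 0 < w) : ∀ᶠ c in 𝓝[>] 1, 0 < stPetersburgGrowth w c := by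
  have hcont : ContinuousAt (stPetersburgGrowth w) 1 :=
    (continuousOn_growth hw).continuousAt (Ioo_mem_nhds one_pos (by linarith))
  exact nhdsWithin_le_nhds (hcont.eventually (eventually_gt_nhds (growth_one_pos hw)))

theorem growth_le_term_zero_add {c : ℝ} (hw : 0 < w) (hc : c ∈ Ico 1 (w + 1)) :
    stPetersburgGrowth w c ≤ stPetersburgTerm w c 0 + ∑' n, stPetersburgTerm w 1 (n + 1) := by
  have hsum (x : ℝ) (hx : x ∈ Ico 1 (w + 1)) := summable_term hw (zero_le_one.trans hx.1) hx.2
  have htail := (summable_nat_add_iff 1).2 (hsum c hc)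
  rw [stPetersburgGrowth, (hsum c hc).tsum_eq_zero_add]
  refine add_le_add_right (htail.tsum_le_tsum (fun n => ?_) ?_) _
  · exact (term_strictAntiOn hw (n + 1)).antitoneOn (by simp; linarith) hc.2 hc.1
  · exact (summable_nat_add_iff 1).2 (hsum 1 ⟨le_rfl, by linarith⟩)

theorem tendsto_growth_atBot (hw : 0 < w) :
    Tendsto (stPetersburgGrowth w) (𝓝[<] (w + 1)) atBot := by
  have harg : Tendsto (fun c => (w - c + 2 ^ 0) / w) (𝓝[<] (w + 1)) (𝓝[>] 0) := by
    refine tendsto_nhdsWithin_iff.2 ⟨?_, eventually_nhdsWithin_of_forall fun c hc =>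
      div_pos (arg_pos hc 0) hw⟩
    have hcont : Continuous fun c : ℝ => (w - c + 2 ^ 0) / w := by fun_prop
    exact (hcont.tendsto' (w + 1) 0 (by ring)).mono_left nhdsWithin_le_nhds
  have hterm : Tendsto (stPetersburgTerm w · 0) (𝓝[<] (w + 1)) atBot :=
    (tendsto_log_nhdsGT_zero.comp harg).const_mul_atBot (by norm_num)
  refine tendsto_atBot_mono' _ ?_
    (tendsto_atBot_add_const_right _ (∑' n, stPetersburgTerm w 1 (n + 1)) hterm)
  filter_upwards [Ioo_mem_nhdsLT (by linarith : 1 < w + 1)] with c hc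
  exact growth_le_term_zero_add hw (Ioo_subset_Ico_self hc)

end StPetersburg

open StPetersburg in
/-- Fix w > 0 and let g(c) = ∑ (1/2)^n ln((w - c + 2^(n-1))/w) for c ∈ (1, w+1).
Then g is continuous and strictly decreasing on (1, w+1), positive near 1,
tends to -∞ as c → (w+1)⁻, and has a unique zero c* ∈ (1, w+1). -/
theorem st_petersburg_break_even_price (w : ℝ) (hw : 0 < w)
    (g : ℝ → ℝ)
    (hg : g = fun c => ∑' n : ℕ, (1/2 : ℝ)^(n+1) * Real.log ((w - c + 2^n) / w)) :
    ContinuousOn g (Set.Ioo 1 (w + 1)) ∧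
    StrictAntiOn g (Set.Ioo 1 (w + 1)) ∧
    (∀ᶠ c in nhdsWithin 1 (Set.Ioi 1), 0 < g c) ∧
    Tendsto g (nhdsWithin (w + 1) (Set.Iio (w + 1))) atBot ∧
    (∃! c : ℝ, c ∈ Set.Ioo 1 (w + 1) ∧ g c = 0) := by
  obtain rfl : g = stPetersburgGrowth w := hg
  have hcont := (continuousOn_growth hw).mono (Ioo_subset_Ioo_left zero_le_one)
  have hanti := (growth_strictAntiOn hw).mono
    (Ioo_subset_Ico_self.trans (Ico_subset_Ico_left zero_le_one))
  have hpos := eventually_growth_pos hw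
  have hbot := tendsto_growth_atBot hw
  exact ⟨hcont, hanti, hpos, hbot, existsUnique_eq_zero_of_strictAntiOn (by linarith) hcont hanti
    hpos (hbot.eventually_lt_atBot 0)⟩
end
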